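/- arXiv:2009.11490 — 5 statements merged into one kernel-verified Lean document; each statement's English description precedes it below -/
import Mathlib

section
/- Let A, B be positive reals and C ≥ 0 with A > B and A ≠ B + C. Then there is a constant K (depending on A, B, C) such that for all x > 0, ∫_0^∞ max(x/a, 1)^{-A} · a^{-B} · max(a, 1)^{-C} (da/a) ≤ K · max(x, 1)^{-min(A-B, C)} · x^{-B}. -/
/-! Since `max y 1 ^ (-s) ≤ y ^ (-r)` for `0 ≤ r ≤ s`, the integrand is dominated by
each monomial `x ^ (-s) * a ^ (s - B - t - 1)` with `0 ≤ s ≤ A`, `0 ≤ t ≤ C`. Cut `(0, ∞)` at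
a point `c`, and use a monomial integrable at `0` below `c` and one integrable at `∞` above it.
Cutting at `x` with `(s, t) = (A, 0), (0, 0)` handles `x ≤ 1`. For `x ≥ 1`, cut at `x` with
`(A, C), (0, C)` when `C < A - B`, and at `1` with `(A, 0), (A, C)` when `A - B < C`. -/

open MeasureTheory Real Set

lemma integral_Ioc_zero_rpow_sub_one {c α : ℝ} (hc : 0 ≤ c) (hα : 0 < α) :
    ∫ a in Ioc 0 c, a ^ (α - 1) = c ^ α / α := by
  rw [← intervalIntegral.integral_of_le hc, integral_rpow (Or.inl (by linarith)),
    sub_add_cancel, zero_rpow hα.ne', sub_zero]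

lemma integrableOn_Ioc_zero_rpow_sub_one {c α : ℝ} (hc : 0 ≤ c) (hα : 0 < α) :
    IntegrableOn (fun a : ℝ => a ^ (α - 1)) (Ioc 0 c) :=
  (intervalIntegrable_iff_integrableOn_Ioc_of_le hc).mp
    (intervalIntegral.intervalIntegrable_rpow' (by linarith))

theorem setIntegral_Ioi_zero_le_of_le_rpow {f : ℝ → ℝ} {c M N α β : ℝ} (hc : 0 < c)
    (hα : 0 < α) (hβ : β < 0) (hf : AEStronglyMeasurable f (volume.restrict (Ioi 0)))
    (hf₀ : ∀ a ∈ Ioi 0, 0 ≤ f a)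
    (hf_Ioc : ∀ a ∈ Ioc 0 c, f a ≤ M * a ^ (α - 1))
    (hf_Ioi : ∀ a ∈ Ioi c, f a ≤ N * a ^ (β - 1)) :
    ∫ a in Ioi 0, f a ≤ M * (c ^ α / α) + N * (c ^ β / -β) := by
  have hg_Ioc : IntegrableOn (fun a => M * a ^ (α - 1)) (Ioc 0 c) :=
    (integrableOn_Ioc_zero_rpow_sub_one hc.le hα).const_mul M
  have hg_Ioi : IntegrableOn (fun a => N * a ^ (β - 1)) (Ioi c) :=
    (integrableOn_Ioi_rpow_of_lt (by linarith) hc).const_mul N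
  have integrableOn_of_le {s : Set ℝ} {g : ℝ → ℝ} (hs : s ⊆ Ioi 0) (hms : MeasurableSet s)
      (hg : IntegrableOn g s) (hfg : ∀ a ∈ s, f a ≤ g a) : IntegrableOn f s := by
    refine hg.mono' (hf.mono_set hs) ((ae_restrict_iff' hms).2 (ae_of_all _ fun a ha => ?_))
    rw [Real.norm_of_nonneg (hf₀ a (hs ha))]
    exact hfg a ha
  have hf_Ioc' := integrableOn_of_le Ioc_subset_Ioi_self measurableSet_Ioc hg_Ioc hf_Ioc
  have hf_Ioi' := integrableOn_of_le (Ioi_subset_Ioi hc.le) measurableSet_Ioi hg_Ioi hf_Ioi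
  rw [← Ioc_union_Ioi_eq_Ioi hc.le,
    setIntegral_union (Ioc_disjoint_Ioi le_rfl) measurableSet_Ioi hf_Ioc' hf_Ioi']
  gcongr
  · calc ∫ a in Ioc 0 c, f a ≤ ∫ a in Ioc 0 c, M * a ^ (α - 1) :=
          setIntegral_mono_on hf_Ioc' hg_Ioc measurableSet_Ioc hf_Ioc
      _ = M * (c ^ α / α) := by
          rw [integral_const_mul, integral_Ioc_zero_rpow_sub_one hc.le hα]
  · calc ∫ a in Ioi c, f a ≤ ∫ a in Ioi c, N * a ^ (β - 1) :=
          setIntegral_mono_on hf_Ioi' hg_Ioi measurableSet_Ioi hf_Ioi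
      _ = N * (c ^ β / -β) := by
          rw [integral_const_mul, integral_Ioi_rpow_of_lt (by linarith) hc, sub_add_cancel,
            neg_div, div_neg]

lemma max_one_rpow_neg_le_rpow_neg {y s r : ℝ} (hy : 0 < y) (hr : 0 ≤ r) (hrs : r ≤ s) :
    max y 1 ^ (-s) ≤ y ^ (-r) :=
  calc max y 1 ^ (-s) ≤ max y 1 ^ (-r) :=
        rpow_le_rpow_of_exponent_le (le_max_right y 1) (by linarith)
    _ ≤ y ^ (-r) := rpow_le_rpow_of_nonpos hy (le_max_left y 1) (by linarith)

noncomputable def integrand (A B C x a : ℝ) : ℝ :=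
  max (x / a) 1 ^ (-A) * a ^ (-B) * max a 1 ^ (-C) / a

lemma integrand_nonneg (A B C x : ℝ) {a : ℝ} (ha : 0 < a) : 0 ≤ integrand A B C x a := by
  unfold integrand; positivity

lemma integrand_le_rpow {A B C x a s t : ℝ} (hx : 0 < x) (ha : 0 < a) (hs : 0 ≤ s)
    (hsA : s ≤ A) (ht : 0 ≤ t) (htC : t ≤ C) :
    integrand A B C x a ≤ x ^ (-s) * a ^ (s - B - t - 1) := by
  calc integrand A B C x a ≤ (x / a) ^ (-s) * a ^ (-B) * a ^ (-t) / a := by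
        unfold integrand
        gcongr
        · exact max_one_rpow_neg_le_rpow_neg (by positivity) hs hsA
        · exact max_one_rpow_neg_le_rpow_neg ha ht htC
    _ = x ^ (-s) * a ^ (s - B - t - 1) := by
        rw [div_rpow hx.le ha.le, rpow_neg ha.le s, rpow_sub_one ha.ne', sub_eq_add_neg,
          sub_eq_add_neg, rpow_add ha, rpow_add ha]
        field_simp

lemma measurable_integrand (A B C x : ℝ) : Measurable (integrand A B C x) := by
  unfold integrand; fun_prop

section Estimates

variable {A B C x : ℝ}

lemma integral_integrand_le (hB : 0 < B) (hAB : B < A) (hC : 0 ≤ C) (hx : 0 < x) :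
    ∫ a in Ioi 0, integrand A B C x a ≤ (1 / (A - B) + 1 / B) * x ^ (-B) := by
  calc ∫ a in Ioi 0, integrand A B C x a
      ≤ x ^ (-A) * (x ^ (A - B - 0) / (A - B - 0))
          + x ^ (-0) * (x ^ (0 - B - 0) / -(0 - B - 0)) :=
        setIntegral_Ioi_zero_le_of_le_rpow hx (by linarith) (by linarith)
          (measurable_integrand A B C x).aestronglyMeasurable
          (fun a ha => integrand_nonneg A B C x ha)
          (fun a ha => integrand_le_rpow hx ha.1 (by linarith) le_rfl le_rfl hC)
          (fun a ha => integrand_le_rpow hx (hx.trans ha) le_rfl (by linarith) le_rfl hC)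
    _ = (1 / (A - B) + 1 / B) * x ^ (-B) := by
        rw [← mul_div_assoc, ← rpow_add hx]
        simp only [sub_zero, zero_sub, neg_zero, rpow_zero, neg_neg]
        ring_nf

lemma integral_integrand_le_of_lt_sub (hB : 0 < B) (hC : 0 ≤ C) (hCAB : C < A - B) (hx : 0 < x) :
    ∫ a in Ioi 0, integrand A B C x a ≤ (1 / (A - B - C) + 1 / (B + C)) * x ^ (-(B + C)) := by
  calc ∫ a in Ioi 0, integrand A B C x a
      ≤ x ^ (-A) * (x ^ (A - B - C) / (A - B - C))
          + x ^ (-0) * (x ^ (0 - B - C) / -(0 - B - C)) :=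
        setIntegral_Ioi_zero_le_of_le_rpow hx (by linarith) (by linarith)
          (measurable_integrand A B C x).aestronglyMeasurable
          (fun a ha => integrand_nonneg A B C x ha)
          (fun a ha => integrand_le_rpow hx ha.1 (by linarith) le_rfl hC le_rfl)
          (fun a ha => integrand_le_rpow hx (hx.trans ha) le_rfl (by linarith) hC le_rfl)
    _ = (1 / (A - B - C) + 1 / (B + C)) * x ^ (-(B + C)) := by
        rw [← mul_div_assoc, ← rpow_add hx]
        simp only [neg_zero, rpow_zero, zero_sub]
        ring_nf

lemma integral_integrand_le_of_sub_lt (hB : 0 < B) (hAB : B < A) (hABC : A - B < C) (hx : 0 < x) :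
    ∫ a in Ioi 0, integrand A B C x a ≤ (1 / (A - B) + 1 / (B + C - A)) * x ^ (-A) := by
  calc ∫ a in Ioi 0, integrand A B C x a
      ≤ x ^ (-A) * (1 ^ (A - B - 0) / (A - B - 0))
          + x ^ (-A) * (1 ^ (A - B - C) / -(A - B - C)) :=
        setIntegral_Ioi_zero_le_of_le_rpow one_pos (by linarith) (by linarith)
          (measurable_integrand A B C x).aestronglyMeasurable
          (fun a ha => integrand_nonneg A B C x ha)
          (fun a ha => integrand_le_rpow hx ha.1 (by linarith) le_rfl le_rfl (by linarith))
          (fun a ha => integrand_le_rpow hx (one_pos.trans ha) (by linarith) le_rfl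
            (by linarith) le_rfl)
    _ = (1 / (A - B) + 1 / (B + C - A)) * x ^ (-A) := by
        simp only [one_rpow, sub_zero, neg_sub]
        ring_nf

end Estimates

theorem stmt_1_general (A B C : ℝ) (hB : 0 < B) (hC : 0 ≤ C)
    (hAB : B < A) (hABC : A ≠ B + C) :
    ∃ K : ℝ, ∀ x : ℝ, 0 < x →
      (∫ a in Ioi (0 : ℝ),
          (max (x / a) 1) ^ (-A) * a ^ (-B) * (max a 1) ^ (-C) / a) ≤
        K * (max x 1) ^ (-(min (A - B) C)) * x ^ (-B) := by
  have hAB' : 0 < 1 / (A - B) := one_div_pos.2 (by linarith)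
  have hB' : 0 < 1 / B := one_div_pos.2 hB
  have hBC' : 0 < 1 / (B + C) := one_div_pos.2 (by linarith)
  have hABC' : 0 < 1 / |A - B - C| := one_div_pos.2 (abs_pos.2 (by contrapose! hABC; linarith))
  refine ⟨1 / (A - B) + 1 / B + 1 / (B + C) + 1 / |A - B - C|, fun x hx => ?_⟩
  rcases le_total x 1 with hx1 | hx1
  · rw [max_eq_right hx1, one_rpow, mul_one]
    exact (integral_integrand_le hB hAB hC hx).trans
      (mul_le_mul_of_nonneg_right (by linarith) (by positivity))
  rw [max_eq_left hx1, mul_assoc, ← rpow_add hx]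
  rcases lt_or_gt_of_ne hABC with h | h
  · rw [min_eq_left (by linarith), show -(A - B) + -B = -A by ring,
      show |A - B - C| = B + C - A by rw [abs_of_neg (by linarith)]; ring]
    exact (integral_integrand_le_of_sub_lt hB hAB (by linarith) hx).trans
      (mul_le_mul_of_nonneg_right (by linarith) (by positivity))
  · rw [min_eq_right (by linarith), show -C + -B = -(B + C) by ring, abs_of_pos (by linarith)]
    exact (integral_integrand_le_of_lt_sub hB hC (by linarith) hx).trans
      (mul_le_mul_of_nonneg_right (by linarith) (by positivity))

/-- For `A, B > 0`, `C ≥ 0` with `A > B` and `A ≠ B + C`, there is a constant `K`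
such that for all `x > 0`,
`∫_0^∞ max(x/a,1)^(-A) a^(-B) max(a,1)^(-C) da/a ≤ K max(x,1)^(-min(A-B,C)) x^(-B)`. -/
theorem stmt_1 (A B C : ℝ) (hA : 0 < A) (hB : 0 < B) (hC : 0 ≤ C)
    (hAB : B < A) (hABC : A ≠ B + C) :
    ∃ K : ℝ, ∀ x : ℝ, 0 < x →
      (∫ a in Ioi (0 : ℝ),
          (max (x / a) 1) ^ (-A) * a ^ (-B) * (max a 1) ^ (-C) / a) ≤
        K * (max x 1) ^ (-(min (A - B) C)) * x ^ (-B) :=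
  stmt_1_general A B C hB hC hAB hABC
end

section
/- Let F be a nonarchimedean local field of odd residue characteristic with ring of integers O, uniformizer ϖ, and residue field of cardinality q. Let ψ : F → ℂ^× be a nontrivial additive character and let N be the smallest integer such that ψ is trivial on ϖ^N O. Then for every unit a ∈ O^× and every α ∈ F, ∫_{a + ϖO} ψ(α x²) dx = (dx(O)/q) · ψ(a² α) · 1_{ϖ^{N-1}O}(α), where dx is a Haar measure on F. In particular ∫_{1+ϖO} ψ(αx²) dx = ∫_{-1+ϖO} ψ(αx²) dx for all α ∈ F. -/
/-! On `a + ϖO` write `α x² = α a² + α (x - a)(x + a)`. If `α ∈ ϖ^(N-1) O` the second term lies in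
`ϖ^N O`, where `ψ` is trivial, so the integrand is the constant `ψ(a² α)`. Otherwise, by minimality
of `N` there is `y ∈ O` with `ψ(ϖ^(N-1) y) ≠ 1`; put `t = ϖ^(N-1) y / (2 a α)`. Then `|t| < 1`, so
translation by `t` preserves the ball `a + ϖO`, and it multiplies the integrand by
`ψ(2 a α t) = ψ(ϖ^(N-1) y) ≠ 1`, because the remaining terms of `α (t + x)²` lie in `ϖ^N O`.
Translation invariance of `μ` then forces the integral to vanish. -/

open MeasureTheory Metric

theorem setIntegral_eq_zero_of_add_left_eq_mul {G : Type*} [AddGroup G] [MeasurableSpace G]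
    [MeasurableAdd G] (μ : Measure G) [μ.IsAddLeftInvariant] {s : Set G} (hs : MeasurableSet s)
    {f : G → ℂ} {t : G} {c : ℂ} (hst : (t + ·) ⁻¹' s = s) (hf : ∀ x ∈ s, f (t + x) = c * f x)
    (hc : c ≠ 1) : ∫ x in s, f x ∂μ = 0 := by
  have h : ∫ x in s, f x ∂μ = c * ∫ x in s, f x ∂μ := calc
    ∫ x in s, f x ∂μ = ∫ x in (t + ·) ⁻¹' s, f (t + x) ∂μ :=
      ((measurePreserving_add_left μ t).setIntegral_preimage_emb
        (measurableEmbedding_addLeft t) f s).symm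
    _ = ∫ x in s, c * f x ∂μ := by rw [hst]; exact setIntegral_congr_fun hs hf
    _ = c * ∫ x in s, f x ∂μ := integral_const_mul c _
  have h' : (c - 1) * ∫ x in s, f x ∂μ = 0 := by rw [sub_mul, one_mul, ← h, sub_self]
  exact (mul_eq_zero.mp h').resolve_left (sub_ne_zero.mpr hc)

section Ultrametric

variable {E : Type*} [SeminormedAddCommGroup E] [IsUltrametricDist E]

theorem preimage_add_left_closedBall_of_norm_le {t : E} {r : ℝ} (ht : ‖t‖ ≤ r) (a : E) :
    (t + ·) ⁻¹' closedBall a r = closedBall a r := by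
  rw [preimage_add_closedBall, ← IsUltrametricDist.closedBall_eq_of_mem]
  simpa [dist_eq_norm] using ht

theorem norm_le_one_of_mem_closedBall {a x : E} {r : ℝ} (ha : ‖a‖ ≤ 1) (hr : r ≤ 1)
    (hx : x ∈ closedBall a r) : ‖x‖ ≤ 1 := by
  have h0 : a ∈ closedBall (0 : E) 1 := mem_closedBall_zero_iff.mpr ha
  rw [← mem_closedBall_zero_iff, IsUltrametricDist.closedBall_eq_of_mem h0]
  exact closedBall_subset_closedBall hr hx

end Ultrametric

theorem eq_one_of_norm_le_of_forall_mul_eq_one {F M : Type*} [NormedDivisionRing F] [One M]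
    {ψ : F → M} {c : F} (hc : c ≠ 0) (hψc : ∀ x : F, ‖x‖ ≤ 1 → ψ (c * x) = 1) {z : F}
    (hz : ‖z‖ ≤ ‖c‖) : ψ z = 1 := by
  have h := hψc (c⁻¹ * z) <| by
    rw [norm_mul, norm_inv]
    exact inv_mul_le_one_of_le₀ hz (norm_nonneg c)
  rwa [mul_inv_cancel_left₀ hc] at h

theorem map_add_eq_of_norm_le {F M : Type*} [NormedDivisionRing F] [MulOneClass M] {ψ : F → M}
    (hψ_add : ∀ x y : F, ψ (x + y) = ψ x * ψ y) {c : F} (hc : c ≠ 0)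
    (hψc : ∀ x : F, ‖x‖ ≤ 1 → ψ (c * x) = 1) (z : F) {w : F} (hw : ‖w‖ ≤ ‖c‖) :
    ψ (z + w) = ψ z := by
  rw [hψ_add, eq_one_of_norm_le_of_forall_mul_eq_one hc hψc hw, mul_one]

section Character

variable {F : Type*} [NormedField F] [IsUltrametricDist F] {ψ : F → ℂ} {c : F}

theorem map_mul_sq_of_mem_closedBall (hψ_add : ∀ x y : F, ψ (x + y) = ψ x * ψ y) (hc : c ≠ 0)
    (hψc : ∀ x : F, ‖x‖ ≤ 1 → ψ (c * x) = 1) {a x α : F} {r : ℝ} (ha : ‖a‖ ≤ 1) (hr : r ≤ 1)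
    (hα : ‖α‖ * r ≤ ‖c‖) (hx : x ∈ closedBall a r) : ψ (α * x ^ 2) = ψ (a ^ 2 * α) := by
  have hxa : ‖x - a‖ ≤ r := mem_closedBall_iff_norm.mp hx
  have hx1 : ‖x + a‖ ≤ 1 := (IsUltrametricDist.norm_add_le_max x a).trans
    (max_le (norm_le_one_of_mem_closedBall ha hr hx) ha)
  have hsmall : ‖α * ((x - a) * (x + a))‖ ≤ ‖c‖ := calc
    ‖α * ((x - a) * (x + a))‖ = ‖α‖ * (‖x - a‖ * ‖x + a‖) := by rw [norm_mul, norm_mul]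
    _ ≤ ‖α‖ * (r * 1) := by gcongr; exact (norm_nonneg _).trans hxa
    _ ≤ ‖c‖ := by rwa [mul_one]
  rw [show α * x ^ 2 = a ^ 2 * α + α * ((x - a) * (x + a)) by ring,
    map_add_eq_of_norm_le hψ_add hc hψc _ hsmall]

theorem map_mul_add_sq_of_mem_closedBall (hψ_add : ∀ x y : F, ψ (x + y) = ψ x * ψ y)
    (hc : c ≠ 0) (hψc : ∀ x : F, ‖x‖ ≤ 1 → ψ (c * x) = 1) {a x α t : F} {r : ℝ}
    (ht : ‖t‖ ≤ r) (hαt : ‖α * t‖ * r ≤ ‖c‖) (hx : x ∈ closedBall a r) :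
    ψ (α * (t + x) ^ 2) = ψ (2 * a * α * t) * ψ (α * x ^ 2) := by
  have h2 : ‖2 * (x - a)‖ ≤ r := by
    rw [norm_mul]
    exact (mul_le_of_le_one_left (norm_nonneg _)
      (by exact_mod_cast IsUltrametricDist.norm_natCast_le_one F 2)).trans
        (mem_closedBall_iff_norm.mp hx)
  have hsmall : ‖α * t * (t + 2 * (x - a))‖ ≤ ‖c‖ := by
    rw [norm_mul]
    refine le_trans ?_ hαt
    gcongr
    exact (IsUltrametricDist.norm_add_le_max _ _).trans (max_le ht h2)
  rw [show α * (t + x) ^ 2 = α * x ^ 2 + 2 * a * α * t + α * t * (t + 2 * (x - a)) by ring,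
    map_add_eq_of_norm_le hψ_add hc hψc _ hsmall, hψ_add, mul_comm]

variable [MeasurableSpace F] [BorelSpace F]

theorem setIntegral_closedBall_map_mul_sq_of_norm_le (μ : Measure F)
    (hψ_add : ∀ x y : F, ψ (x + y) = ψ x * ψ y) (hc : c ≠ 0)
    (hψc : ∀ x : F, ‖x‖ ≤ 1 → ψ (c * x) = 1) {a α : F} {r : ℝ} (ha : ‖a‖ ≤ 1) (hr : r ≤ 1)
    (hα : ‖α‖ * r ≤ ‖c‖) :
    ∫ x in closedBall a r, ψ (α * x ^ 2) ∂μ = μ.real (closedBall a r) * ψ (a ^ 2 * α) := by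
  rw [setIntegral_congr_fun measurableSet_closedBall
      (fun x hx => map_mul_sq_of_mem_closedBall hψ_add hc hψc ha hr hα hx),
    setIntegral_const, Complex.real_smul]

theorem setIntegral_closedBall_map_mul_sq_eq_zero (μ : Measure F) [μ.IsAddLeftInvariant]
    (hψ_add : ∀ x y : F, ψ (x + y) = ψ x * ψ y) (hc : c ≠ 0)
    (hψc : ∀ x : F, ‖x‖ ≤ 1 → ψ (c * x) = 1) {c' y a α : F} {r : ℝ} (hy : ‖y‖ ≤ 1)
    (hψy : ψ (c' * y) ≠ 1) (hα : ‖c'‖ < ‖α‖) (ha : ‖a‖ = 1) (htwo : ‖(2 : F)‖ = 1)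
    (hr : ∀ x : F, ‖x‖ < 1 → ‖x‖ ≤ r) (hc' : ‖c'‖ * r ≤ ‖c‖) :
    ∫ x in closedBall a r, ψ (α * x ^ 2) ∂μ = 0 := by
  have hα0 : α ≠ 0 := norm_pos_iff.mp ((norm_nonneg c').trans_lt hα)
  have ha0 : a ≠ 0 := norm_ne_zero_iff.mp (by rw [ha]; exact one_ne_zero)
  have h20 : (2 : F) ≠ 0 := norm_ne_zero_iff.mp (by rw [htwo]; exact one_ne_zero)
  set t := c' * y / (2 * a * α) with ht_def
  have hcross : 2 * a * α * t = c' * y := by rw [ht_def]; field_simp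
  have hαt : ‖α * t‖ ≤ ‖c'‖ := calc
    ‖α * t‖ = ‖c'‖ * ‖y‖ := by
      rw [show α * t = c' * y / (2 * a) by rw [ht_def]; field_simp, norm_div, norm_mul, norm_mul,
        ha, htwo, mul_one, div_one]
    _ ≤ ‖c'‖ := mul_le_of_le_one_right (norm_nonneg _) hy
  have ht : ‖t‖ ≤ r := hr t <| by
    rw [norm_mul] at hαt
    by_contra! h
    nlinarith [norm_nonneg c', norm_nonneg t]
  refine setIntegral_eq_zero_of_add_left_eq_mul μ measurableSet_closedBall
    (preimage_add_left_closedBall_of_norm_le ht a) (fun x hx => ?_) (hcross ▸ hψy)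
  exact map_mul_add_sq_of_mem_closedBall hψ_add hc hψc ht
    ((mul_le_mul_of_nonneg_right hαt ((norm_nonneg t).trans ht)).trans hc') hx

end Character

theorem stmt_8_general (F : Type*) [NontriviallyNormedField F] [IsUltrametricDist F]
    [MeasurableSpace F] [BorelSpace F]
    (μ : Measure F) [μ.IsAddHaarMeasure]
    (ϖ : F) (hϖ0 : ϖ ≠ 0) (hϖlt : ‖ϖ‖ < 1)
    (hϖmax : ∀ x : F, ‖x‖ < 1 → ‖x‖ ≤ ‖ϖ‖)
    (htwo : ‖(2 : F)‖ = 1)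
    (q : ℕ)
    (hq : μ {x : F | ‖x‖ ≤ ‖ϖ‖} = μ {x : F | ‖x‖ ≤ 1} / q)
    (ψ : F → ℂ)
    (hψ_add : ∀ x y : F, ψ (x + y) = ψ x * ψ y)
    (N : ℤ) (hN_triv : ∀ x : F, ‖x‖ ≤ 1 → ψ (ϖ ^ N * x) = 1)
    (hN_min : ∀ M : ℤ, (∀ x : F, ‖x‖ ≤ 1 → ψ (ϖ ^ M * x) = 1) → N ≤ M) :
    (∀ a : F, ‖a‖ = 1 → ∀ α : F,
      ∫ x in {x : F | ‖x - a‖ ≤ ‖ϖ‖}, ψ (α * x ^ 2) ∂μ =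
        (((μ {x : F | ‖x‖ ≤ 1}).toReal / q : ℝ) : ℂ) * ψ (a ^ 2 * α) *
          Set.indicator {β : F | ‖β‖ ≤ ‖ϖ ^ (N - 1)‖} (fun _ => (1 : ℂ)) α) ∧
      ∀ α : F,
        ∫ x in {x : F | ‖x - 1‖ ≤ ‖ϖ‖}, ψ (α * x ^ 2) ∂μ =
          ∫ x in {x : F | ‖x - (-1)‖ ≤ ‖ϖ‖}, ψ (α * x ^ 2) ∂μ := by
  have hball (a : F) : {x : F | ‖x - a‖ ≤ ‖ϖ‖} = closedBall a ‖ϖ‖ := by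
    ext; simp [dist_eq_norm]
  have hvol (a : F) : μ.real (closedBall a ‖ϖ‖) = (μ {x : F | ‖x‖ ≤ 1}).toReal / q := by
    rw [Measure.addHaar_real_closedBall_center, ← hball, measureReal_def]
    simp only [sub_zero, hq, ENNReal.toReal_div, ENNReal.toReal_natCast]
  have hϖN : ‖ϖ ^ (N - 1)‖ * ‖ϖ‖ = ‖ϖ ^ N‖ := by
    rw [← norm_mul, ← zpow_add_one₀ hϖ0, sub_add_cancel]
  have key (a : F) (ha : ‖a‖ = 1) (α : F) :
      ∫ x in {x : F | ‖x - a‖ ≤ ‖ϖ‖}, ψ (α * x ^ 2) ∂μ =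
        (((μ {x : F | ‖x‖ ≤ 1}).toReal / q : ℝ) : ℂ) * ψ (a ^ 2 * α) *
          Set.indicator {β : F | ‖β‖ ≤ ‖ϖ ^ (N - 1)‖} (fun _ => (1 : ℂ)) α := by
    rw [hball]
    by_cases hα : α ∈ {β : F | ‖β‖ ≤ ‖ϖ ^ (N - 1)‖}
    · rw [Set.indicator_of_mem hα, mul_one, ← hvol a]
      exact setIntegral_closedBall_map_mul_sq_of_norm_le μ hψ_add (zpow_ne_zero N hϖ0) hN_triv
        ha.le hϖlt.le (hϖN ▸ mul_le_mul_of_nonneg_right hα (norm_nonneg ϖ))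
    · obtain ⟨y, hy, hψy⟩ : ∃ y : F, ‖y‖ ≤ 1 ∧ ψ (ϖ ^ (N - 1) * y) ≠ 1 := by
        by_contra! h
        linarith [hN_min (N - 1) h]
      rw [Set.indicator_of_notMem hα, mul_zero]
      exact setIntegral_closedBall_map_mul_sq_eq_zero μ hψ_add (zpow_ne_zero N hϖ0) hN_triv hy
        hψy (not_le.mp hα) ha htwo hϖmax hϖN.le
  refine ⟨key, fun α => ?_⟩
  rw [key 1 (by simp) α, key (-1) (by simp) α, neg_one_sq, one_pow]

/-- Let `F` be a nonarchimedean local field of odd residue characteristic —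
formalized as a complete, locally compact, nontrivially normed field with ultrametric norm,
ring of integers `O = {‖x‖ ≤ 1}`, uniformizer `ϖ` and residue cardinality `q` (so that
`μ(ϖO) = μ(O)/q`), with `‖2‖ = 1` (odd residue characteristic) — equipped with a Haar
measure `μ`.  Let `ψ : F → ℂˣ` be a nontrivial continuous additive character and `N` the
smallest integer with `ψ` trivial on `ϖ^N O`.  Then for every unit `a` (`‖a‖ = 1`) and every
`α ∈ F`,
`∫_{a+ϖO} ψ(α x²) dμ(x) = (μ(O)/q) · ψ(a²α) · 1_{ϖ^{N-1}O}(α)`;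
in particular `∫_{1+ϖO} ψ(αx²) dμ = ∫_{-1+ϖO} ψ(αx²) dμ` for all `α`. -/
theorem stmt_8 (F : Type*) [NontriviallyNormedField F] [IsUltrametricDist F]
    [CompleteSpace F] [ProperSpace F]
    [MeasurableSpace F] [BorelSpace F]
    (μ : Measure F) [μ.IsAddHaarMeasure]
    (ϖ : F) (hϖ0 : ϖ ≠ 0) (hϖlt : ‖ϖ‖ < 1)
    (hϖmax : ∀ x : F, ‖x‖ < 1 → ‖x‖ ≤ ‖ϖ‖)
    (htwo : ‖(2 : F)‖ = 1)
    (q : ℕ) (hq1 : 1 < q)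
    (hq : μ {x : F | ‖x‖ ≤ ‖ϖ‖} = μ {x : F | ‖x‖ ≤ 1} / q)
    (ψ : F → ℂ) (hψ_cont : Continuous ψ)
    (hψ_add : ∀ x y : F, ψ (x + y) = ψ x * ψ y)
    (hψ_ne : ∃ x : F, ψ x ≠ 1)
    (N : ℤ) (hN_triv : ∀ x : F, ‖x‖ ≤ 1 → ψ (ϖ ^ N * x) = 1)
    (hN_min : ∀ M : ℤ, (∀ x : F, ‖x‖ ≤ 1 → ψ (ϖ ^ M * x) = 1) → N ≤ M) :
    (∀ a : F, ‖a‖ = 1 → ∀ α : F,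
      ∫ x in {x : F | ‖x - a‖ ≤ ‖ϖ‖}, ψ (α * x ^ 2) ∂μ =
        (((μ {x : F | ‖x‖ ≤ 1}).toReal / q : ℝ) : ℂ) * ψ (a ^ 2 * α) *
          Set.indicator {β : F | ‖β‖ ≤ ‖ϖ ^ (N - 1)‖} (fun _ => (1 : ℂ)) α) ∧
      ∀ α : F,
        ∫ x in {x : F | ‖x - 1‖ ≤ ‖ϖ‖}, ψ (α * x ^ 2) ∂μ =
          ∫ x in {x : F | ‖x - (-1)‖ ≤ ‖ϖ‖}, ψ (α * x ^ 2) ∂μ :=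
  stmt_8_general F μ ϖ hϖ0 hϖlt hϖmax htwo q hq ψ hψ_add N hN_triv hN_min
end

section
/- Let F be a nonarchimedean local field of odd residue characteristic and ψ : F → ℂ^× a nontrivial additive character. Define T' : C_c^∞(F) → C(F) by T'(f)(α) = ∫_F f(x) ψ(α x²) dx. Then the kernel of T' is an infinite-dimensional ℂ-vector space. -/
open MeasureTheory Metric Set

/-- The indicator of a clopen set is locally constant. -/
lemma stmt9_aux_lc {X : Type*} [TopologicalSpace X] {s : Set X} (hs : IsClopen s) :
    IsLocallyConstant (s.indicator (fun _ => (1:ℂ))) := by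
  rw [IsLocallyConstant.iff_exists_open]
  intro x
  by_cases hx : x ∈ s
  · exact ⟨s, hs.isOpen, hx, fun y hy => by simp [indicator_of_mem, hx, hy]⟩
  · exact ⟨sᶜ, hs.compl.isOpen, hx, fun y hy => by
      simp only [mem_compl_iff] at hy
      simp [indicator_of_notMem, hx, hy]⟩

/-- Let `F` be a nonarchimedean local field of odd residue characteristic —
formalized as a complete, locally compact, nontrivially normed field with ultrametric norm,
a uniformizer `ϖ`, and `‖2‖ = 1` — equipped with a Haar measure `μ`, and let
`ψ : F → ℂˣ` be a nontrivial continuous additive character.  Define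
`T' : C_c^∞(F) → C(F)` by `T'(f)(α) = ∫_F f(x) ψ(α x²) dμ(x)`.  Then the kernel of `T'`
is infinite dimensional: for every `n` there are `n` linearly independent locally constant
compactly supported functions annihilated by `T'`. -/
theorem stmt_9 (F : Type*) [NontriviallyNormedField F] [IsUltrametricDist F]
    [CompleteSpace F] [ProperSpace F]
    [MeasurableSpace F] [BorelSpace F]
    (μ : Measure F) [μ.IsAddHaarMeasure]
    (ϖ : F) (hϖ0 : ϖ ≠ 0) (hϖlt : ‖ϖ‖ < 1)
    (hϖmax : ∀ x : F, ‖x‖ < 1 → ‖x‖ ≤ ‖ϖ‖)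
    (htwo : ‖(2 : F)‖ = 1)
    (ψ : F → ℂ) (hψ_cont : Continuous ψ)
    (hψ_add : ∀ x y : F, ψ (x + y) = ψ x * ψ y)
    (hψ_ne : ∃ x : F, ψ x ≠ 1) :
    ∀ n : ℕ, ∃ g : Fin n → (F → ℂ),
      (∀ i, IsLocallyConstant (g i) ∧ HasCompactSupport (g i) ∧
        ∀ α : F, ∫ x, g i x * ψ (α * x ^ 2) ∂μ = 0) ∧
      LinearIndependent ℂ g := by
  intro n
  have hϖpos : (0:ℝ) < ‖ϖ‖ := norm_pos_iff.mpr hϖ0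
  have hinv : 1 < ‖ϖ‖⁻¹ := (one_lt_inv₀ hϖpos).mpr hϖlt
  -- the centers
  set b : Fin n → F := fun i => ϖ⁻¹ ^ ((i : ℕ) + 1) with hbdef
  have hbnorm : ∀ i : Fin n, ‖b i‖ = ‖ϖ‖⁻¹ ^ ((i : ℕ) + 1) := by
    intro i; simp [hbdef, norm_pow, norm_inv]
  have hb1 : ∀ i, 1 < ‖b i‖ := fun i => by
    rw [hbnorm]; exact one_lt_pow₀ hinv (Nat.succ_ne_zero _)
  have hbne : ∀ i j : Fin n, i ≠ j → ‖b i‖ ≠ ‖b j‖ := by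
    intro i j hij h
    rw [hbnorm, hbnorm] at h
    exact hij (Fin.ext (Nat.succ_injective ((pow_right_strictMono₀ hinv).injective h)))
  -- the functions
  set g : Fin n → (F → ℂ) := fun i x =>
    (closedBall (b i) 1).indicator (fun _ => (1:ℂ)) x
      - (closedBall (-(b i)) 1).indicator (fun _ => (1:ℂ)) x with hgdef
  -- evaluation facts
  have hmemS : ∀ i j : Fin n, b j ∈ closedBall (b i) 1 ↔ i = j := by
    intro i j
    constructor
    · intro h
      by_contra hij
      have h1 : ‖b j + (-b i)‖ = max ‖b j‖ ‖-b i‖ :=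
        IsUltrametricDist.norm_add_eq_max_of_norm_ne_norm
          (by rw [norm_neg]; exact hbne j i (Ne.symm hij))
      have h2 : dist (b j) (b i) ≤ 1 := mem_closedBall.mp h
      rw [dist_eq_norm, sub_eq_add_neg, h1, norm_neg] at h2
      exact absurd h2 (not_le.mpr (lt_max_iff.mpr (Or.inl (hb1 j))))
    · rintro rfl; simp
  have hmemT : ∀ i j : Fin n, b j ∉ closedBall (-(b i)) 1 := by
    intro i j h
    rw [mem_closedBall, dist_eq_norm, sub_neg_eq_add] at h
    by_cases hij : i = j
    · subst hij
      have : b i + b i = 2 * b i := by ring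
      rw [this, norm_mul, htwo, one_mul] at h
      exact absurd h (not_le.mpr (hb1 i))
    · have h1 : ‖b j + b i‖ = max ‖b j‖ ‖b i‖ :=
        IsUltrametricDist.norm_add_eq_max_of_norm_ne_norm (hbne j i (Ne.symm hij))
      rw [h1] at h
      exact absurd h (not_le.mpr (lt_max_iff.mpr (Or.inl (hb1 j))))
  have hgval : ∀ i j : Fin n, g i (b j) = if i = j then 1 else 0 := by
    intro i j
    rw [hgdef]
    simp only
    rw [indicator_of_notMem (hmemT i j)]
    by_cases hij : i = j
    · rw [indicator_of_mem ((hmemS i j).mpr hij)]; simp [hij]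
    · rw [indicator_of_notMem (fun h => hij ((hmemS i j).mp h))]; simp [hij]
  refine ⟨g, fun i => ?_, ?_⟩
  · -- locally constant, compact support, kernel
    have hclopS : IsClopen (closedBall (b i) 1) :=
      IsUltrametricDist.isClopen_closedBall _ one_ne_zero
    have hclopT : IsClopen (closedBall (-(b i)) 1) :=
      IsUltrametricDist.isClopen_closedBall _ one_ne_zero
    have hlcS := stmt9_aux_lc hclopS
    have hlcT := stmt9_aux_lc hclopT
    refine ⟨hlcS.sub hlcT, ?_, ?_⟩
    · -- compact support
      apply HasCompactSupport.intro
        ((isCompact_closedBall (b i) 1).union (isCompact_closedBall (-(b i)) 1))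
      intro x hx
      simp only [Set.mem_union, not_or] at hx
      rw [hgdef]
      simp only
      rw [indicator_of_notMem hx.1, indicator_of_notMem hx.2, sub_zero]
    · intro α
      -- the two integrands
      set φ : F → ℂ := fun x =>
        (closedBall (b i) 1).indicator (fun _ => (1:ℂ)) x * ψ (α * x ^ 2) with hφ
      set φ' : F → ℂ := fun x =>
        (closedBall (-(b i)) 1).indicator (fun _ => (1:ℂ)) x * ψ (α * x ^ 2) with hφ'
      have hψc : Continuous fun x : F => ψ (α * x ^ 2) :=
        hψ_cont.comp (by continuity)
      have hφc : Continuous φ := ((stmt9_aux_lc hclopS).continuous).mul hψc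
      have hφ'c : Continuous φ' := ((stmt9_aux_lc hclopT).continuous).mul hψc
      have hφcs : HasCompactSupport φ := by
        apply HasCompactSupport.intro (isCompact_closedBall (b i) 1)
        intro x hx; rw [hφ]; simp [indicator_of_notMem hx]
      have hφ'cs : HasCompactSupport φ' := by
        apply HasCompactSupport.intro (isCompact_closedBall (-(b i)) 1)
        intro x hx; rw [hφ']; simp [indicator_of_notMem hx]
      have hφint : Integrable φ μ := hφc.integrable_of_hasCompactSupport hφcs
      have hφ'int : Integrable φ' μ := hφ'c.integrable_of_hasCompactSupport hφ'cs
      have hsplit : (fun x => g i x * ψ (α * x ^ 2)) = fun x => φ x - φ' x := by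
        funext x; rw [hgdef, hφ, hφ']; simp only; ring
      rw [hsplit, integral_sub hφint hφ'int]
      -- φ' = φ ∘ neg
      have hkey : ∀ x : F, φ' x = φ (-x) := by
        intro x
        simp only [hφ, hφ']
        rw [show (α * (-x) ^ 2 : F) = α * x ^ 2 by ring]
        congr 1
        have : (-x ∈ closedBall (b i) 1) ↔ (x ∈ closedBall (-(b i)) 1) := by
          simp only [mem_closedBall, dist_eq_norm]
          constructor <;> intro h <;>
            · rw [show (-x - b i) = -(x - -(b i)) by ring, norm_neg] at * <;> try exact h
        by_cases hx : x ∈ closedBall (-(b i)) 1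
        · rw [indicator_of_mem hx, indicator_of_mem (this.mpr hx)]
        · rw [indicator_of_notMem hx, indicator_of_notMem (fun h => hx (this.mp h))]
      have : ∫ x, φ' x ∂μ = ∫ x, φ (-x) ∂μ := by
        congr 1; funext x; exact hkey x
      rw [this, integral_neg_eq_self φ μ, sub_self]
  · -- linear independence
    rw [Fintype.linearIndependent_iff]
    intro c hc j
    have := congrFun hc (b j)
    simp only [Finset.sum_apply, Pi.smul_apply, smul_eq_mul, Pi.zero_apply] at this
    rw [Finset.sum_eq_single j] at this
    · rw [hgval j j, if_pos rfl, mul_one] at this; exact this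
    · intro i _ hij; rw [hgval i j, if_neg hij, mul_zero]
    · intro h; exact absurd (Finset.mem_univ j) h
end

section
/- Let R be a commutative ring. For t_1, t_2, t_3 ∈ R, let u(t) ∈ Sp_6(R) be the block matrix [[I_3, D],[0, I_3]] with D = diag(t_1, t_2, t_3), and let γ_b ∈ Sp_6(ℤ) be the matrix [[0,0,0,-1,0,0],[0,1,0,0,0,0],[0,0,1,0,0,0],[1,1,1,0,0,0],[0,0,0,-1,1,0],[0,0,0,-1,0,1]]. Then γ_b · u(t) · γ_b^{-1} lies in [P,P](R) — that is, it is block upper triangular of the form [[A, Z],[0, (A^T)^{-1}]] with det(A) = 1 — if and only if t_1 + t_2 + t_3 = 0. -/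
open Matrix

set_option maxHeartbeats 1000000 in
private lemma stmt_11_key (R : Type*) [CommRing R] (t : Fin 3 → R) :
    (fromBlocks !![(0:R),0,0; 0,1,0; 0,0,1] !![-1,0,0; 0,0,0; 0,0,0]
        !![1,1,1; 0,0,0; 0,0,0] !![0,0,0; -1,1,0; -1,0,1]) *
      (fromBlocks 1 !![t 0,0,0; 0,t 1,0; 0,0,t 2] 0 1) *
      (fromBlocks !![0,-1,-1; 0,1,0; 0,0,1] !![1,0,0; 0,0,0; 0,0,0]
        !![-1,0,0; -1,0,0; -1,0,0] !![0,0,0; 0,1,0; 0,0,1]) =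
      fromBlocks !![1,0,0; -(t 1),1,0; -(t 2),0,1]
        !![0,0,0; 0,t 1,0; 0,0,t 2]
        !![-(t 0 + t 1 + t 2),0,0; 0,0,0; 0,0,0]
        !![1,t 1,t 2; 0,1,0; 0,0,1] := by
  rw [Matrix.fromBlocks_multiply, Matrix.fromBlocks_multiply]
  refine Matrix.fromBlocks_inj.mpr ⟨?_, ?_, ?_, ?_⟩ <;>
    ext i j <;> fin_cases i <;> fin_cases j <;>
    simp [Matrix.mul_apply, Fin.sum_univ_three, Matrix.vecHead, Matrix.vecTail] <;> ring

set_option maxHeartbeats 1000000 in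
private lemma stmt_11_inv (R : Type*) [CommRing R] :
    (fromBlocks !![(0:R),0,0; 0,1,0; 0,0,1] !![-1,0,0; 0,0,0; 0,0,0]
        !![1,1,1; 0,0,0; 0,0,0] !![0,0,0; -1,1,0; -1,0,1]) *
      (fromBlocks !![0,-1,-1; 0,1,0; 0,0,1] !![1,0,0; 0,0,0; 0,0,0]
        !![-1,0,0; -1,0,0; -1,0,0] !![0,0,0; 0,1,0; 0,0,1]) = 1 := by
  rw [Matrix.fromBlocks_multiply, ← Matrix.fromBlocks_one]
  refine Matrix.fromBlocks_inj.mpr ⟨?_, ?_, ?_, ?_⟩ <;>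
    ext i j <;> fin_cases i <;> fin_cases j <;>
    simp [Matrix.mul_apply, Fin.sum_univ_three, Matrix.vecHead, Matrix.vecTail,
      Matrix.one_apply]

private lemma stmt_11_Ainv (R : Type*) [CommRing R] (t : Fin 3 → R) :
    (!![1,0,0; -(t 1),1,0; -(t 2),0,1]ᵀ : Matrix (Fin 3) (Fin 3) R) *
      !![1,t 1,t 2; 0,1,0; 0,0,1] = 1 := by
  ext i j <;> fin_cases i <;> fin_cases j <;>
    simp [Matrix.mul_apply, Fin.sum_univ_three, Matrix.vecHead, Matrix.vecTail,
      Matrix.one_apply]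

/-- For a commutative ring `R` and `t₁, t₂, t₃ ∈ R`, with
`u(t) = [[I₃, diag(t₁,t₂,t₃)],[0, I₃]]` and `γ_b` the explicit symplectic matrix, the
conjugate `γ_b · u(t) · γ_b⁻¹` lies in `[P,P](R)`, i.e. has the block upper triangular form
`[[A, Z],[0, (Aᵀ)⁻¹]]` with `det A = 1`, if and only if `t₁ + t₂ + t₃ = 0`. -/
theorem stmt_11 (R : Type*) [CommRing R] (t : Fin 3 → R) :
    let γb : Matrix (Fin 3 ⊕ Fin 3) (Fin 3 ⊕ Fin 3) R :=
      fromBlocks !![0,0,0; 0,1,0; 0,0,1] !![-1,0,0; 0,0,0; 0,0,0]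
        !![1,1,1; 0,0,0; 0,0,0] !![0,0,0; -1,1,0; -1,0,1]
    let u : Matrix (Fin 3 ⊕ Fin 3) (Fin 3 ⊕ Fin 3) R :=
      fromBlocks 1 (Matrix.diagonal t) 0 1
    (∃ (A Z : Matrix (Fin 3) (Fin 3) R),
        γb * u * γb⁻¹ = fromBlocks A Z 0 (Aᵀ)⁻¹ ∧ A.det = 1) ↔
      t 0 + t 1 + t 2 = 0 := by
  intro γb u
  have hD : Matrix.diagonal t = !![t 0,0,0; 0,t 1,0; 0,0,t 2] := by
    ext i j <;> fin_cases i <;> fin_cases j <;>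
      simp [Matrix.diagonal, Matrix.vecHead, Matrix.vecTail]
  have hgi : γb⁻¹ =
      fromBlocks !![0,-1,-1; 0,1,0; 0,0,1] !![1,0,0; 0,0,0; 0,0,0]
        !![-1,0,0; -1,0,0; -1,0,0] !![0,0,0; 0,1,0; 0,0,1] :=
    inv_eq_right_inv (stmt_11_inv R)
  have key : γb * u * γb⁻¹ =
      fromBlocks !![1,0,0; -(t 1),1,0; -(t 2),0,1]
        !![0,0,0; 0,t 1,0; 0,0,t 2]
        !![-(t 0 + t 1 + t 2),0,0; 0,0,0; 0,0,0]
        !![1,t 1,t 2; 0,1,0; 0,0,1] := by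
    rw [hgi]
    show (fromBlocks !![0,0,0; 0,1,0; 0,0,1] !![-1,0,0; 0,0,0; 0,0,0]
        !![1,1,1; 0,0,0; 0,0,0] !![0,0,0; -1,1,0; -1,0,1]) *
      (fromBlocks 1 (Matrix.diagonal t) 0 1) *
      (fromBlocks !![0,-1,-1; 0,1,0; 0,0,1] !![1,0,0; 0,0,0; 0,0,0]
        !![-1,0,0; -1,0,0; -1,0,0] !![0,0,0; 0,1,0; 0,0,1]) = _
    rw [hD]
    exact stmt_11_key R t
  constructor
  · rintro ⟨A, Z, hAZ, -⟩
    have := congrFun (congrFun (key.symm.trans hAZ) (Sum.inr 0)) (Sum.inl 0)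
    simp [Matrix.vecHead, Matrix.vecTail] at this
    linear_combination -this
  · intro hsum
    refine ⟨!![1,0,0; -(t 1),1,0; -(t 2),0,1], !![0,0,0; 0,t 1,0; 0,0,t 2], ?_, ?_⟩
    · rw [key, inv_eq_right_inv (stmt_11_Ainv R t)]
      congr 1
      ext i j <;> fin_cases i <;> fin_cases j <;>
        simp [Matrix.vecHead, Matrix.vecTail] <;> linear_combination -hsum
    · simp [Matrix.det_fin_three]
end

section
/- Fix a real number q > 1 and an integer r ≥ 1. Define b : ℤ → ℝ by b(m) = Σ q^{2j_1 + 4j_2 + ... + 2r·j_r}, the sum over all tuples (j_1,...,j_r, k) ∈ ℤ_{≥0}^{r+1} with k + 2(j_1 + ... + j_r) = m (so b(m) = 0 for m < 0). Let S denote the shift operator (Sf)(m) = f(m−2). Then (∏_{j=1}^{r} (1 − q^{2j} S)) b = 1_{ℤ_{≥0}}, i.e. the resulting function equals 1 for m ≥ 0 and 0 for m < 0. -/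
/-- The basic function: `b m = Σ q^(2j₁+4j₂+⋯+2r·j_r)`, summed over tuples
`(j₁,…,j_r,k) ∈ ℤ_{≥0}^{r+1}` with `k + 2(j₁+⋯+j_r) = m`. -/
noncomputable def basicFn (q : ℝ) (r : ℕ) (m : ℤ) : ℝ :=
  ∑' p : (Fin r → ℕ) × ℕ,
    if (p.2 : ℤ) + 2 * ∑ i, (p.1 i : ℤ) = m then
      q ^ (2 * ∑ i : Fin r, (i.1 + 1) * p.1 i) else 0

/-- Apply the operator `∏_{j=1}^{r} (1 - q^{2j} S)` to `f`, where `(Sf)(m) = f(m-2)`. -/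
noncomputable def applyOps (q : ℝ) (r : ℕ) (f : ℤ → ℝ) : ℤ → ℝ :=
  (List.range r).foldr (fun j g => fun m => g m - q ^ (2 * (j + 1)) * g (m - 2)) f

/-! Splitting off the last coordinate `j` of the tuple gives
`b_{s+1}(m) = ∑_j q^{2(s+1)j} b_s(m - 2j)`, a geometric series in the shift `S`; hence
`b_{s+1} = b_s + q^{2(s+1)} S b_{s+1}`, i.e. `(1 - q^{2(s+1)} S) b_{s+1} = b_s`. Applying the factors
one at a time thus reduces `b_r` to `b_0`, which is the indicator of `ℤ_{≥0}`. -/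

open Finset

noncomputable def basicSummand (q : ℝ) (n : ℕ) (m : ℤ) (p : (Fin n → ℕ) × ℕ) : ℝ :=
  if (p.2 : ℤ) + 2 * ∑ i, (p.1 i : ℤ) = m then q ^ (2 * ∑ i : Fin n, (i.1 + 1) * p.1 i) else 0

section BasicFn

variable (q : ℝ)

lemma basicFn_eq_tsum_basicSummand (n : ℕ) (m : ℤ) :
    basicFn q n m = ∑' p, basicSummand q n m p :=
  rfl

lemma summable_basicSummand (n : ℕ) (m : ℤ) : Summable (basicSummand q n m) := by
  refine summable_of_ne_finset_zero (s := Fintype.piFinset (fun _ => range (m.toNat + 1)) ×ˢ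
    range (m.toNat + 1)) fun p hp => if_neg fun h => hp ?_
  have hJ : ∀ i, (p.1 i : ℤ) ≤ ∑ i, (p.1 i : ℤ) := fun i =>
    single_le_sum (f := fun i => (p.1 i : ℤ)) (fun i _ => by positivity) (mem_univ i)
  have hnonneg : 0 ≤ ∑ i, (p.1 i : ℤ) := sum_nonneg fun i _ => by positivity
  simp only [mem_product, Fintype.mem_piFinset, mem_range]
  exact ⟨fun i => by have := hJ i; omega, by omega⟩

lemma basicFn_of_neg (n : ℕ) {m : ℤ} (hm : m < 0) : basicFn q n m = 0 := by
  refine (tsum_congr fun p => if_neg ?_).trans tsum_zero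
  have : 0 ≤ ∑ i, (p.1 i : ℤ) := sum_nonneg fun i _ => by positivity
  omega

lemma basicFn_zero (m : ℤ) : basicFn q 0 m = if 0 ≤ m then 1 else 0 := by
  split_ifs with hm
  · rw [basicFn_eq_tsum_basicSummand, tsum_eq_single (default, m.toNat)]
    · simp [basicSummand, hm]
    · rintro ⟨J, k⟩ hp
      refine if_neg fun h => hp (Prod.ext (Subsingleton.elim _ _) ?_)
      simp only [univ_eq_empty, sum_empty, mul_zero, add_zero] at h
      omega
  · exact basicFn_of_neg q 0 (not_le.mp hm)

lemma basicSummand_snoc (s j : ℕ) (J : Fin s → ℕ) (k : ℕ) (m : ℤ) :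
    basicSummand q (s + 1) m (Fin.snoc J j, k) =
      q ^ (2 * (s + 1) * j) * basicSummand q s (m - 2 * j) (J, k) := by
  simp only [basicSummand, Fin.sum_univ_castSucc, Fin.snoc_castSucc, Fin.snoc_last,
    Fin.val_castSucc, Fin.val_last, mul_ite, mul_zero, ← pow_add]
  congr 1
  · exact propext (by omega)
  · ring

lemma basicFn_succ_eq_tsum (s : ℕ) (m : ℤ) :
    basicFn q (s + 1) m = ∑' j : ℕ, q ^ (2 * (s + 1) * j) * basicFn q s (m - 2 * j) := by
  let e : ℕ × ((Fin s → ℕ) × ℕ) ≃ (Fin (s + 1) → ℕ) × ℕ :=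
    (Equiv.prodAssoc _ _ _).symm.trans ((Fin.snocEquiv fun _ => ℕ).prodCongr (Equiv.refl ℕ))
  have he : Summable (basicSummand q (s + 1) m ∘ e) :=
    e.summable_iff.mpr (summable_basicSummand q _ m)
  calc basicFn q (s + 1) m = ∑' x, basicSummand q (s + 1) m (e x) := (e.tsum_eq _).symm
    _ = ∑' (j : ℕ) (c : (Fin s → ℕ) × ℕ), basicSummand q (s + 1) m (e (j, c)) :=
        he.tsum_prod' fun j => he.prod_factor j
    _ = _ := tsum_congr fun j => by
        rw [basicFn_eq_tsum_basicSummand, ← tsum_mul_left]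
        exact tsum_congr fun c => basicSummand_snoc q s j c.1 c.2 m

lemma summable_basicFn_shift (s : ℕ) (m : ℤ) :
    Summable fun j : ℕ => q ^ (2 * (s + 1) * j) * basicFn q s (m - 2 * j) :=
  summable_of_ne_finset_zero (s := range (m.toNat + 1)) fun j hj => by
    rw [mem_range] at hj
    rw [basicFn_of_neg q s (by omega), mul_zero]

lemma basicFn_succ (s : ℕ) (m : ℤ) :
    basicFn q (s + 1) m = basicFn q s m + q ^ (2 * (s + 1)) * basicFn q (s + 1) (m - 2) := by
  rw [basicFn_succ_eq_tsum, (summable_basicFn_shift q s m).tsum_eq_zero_add,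
    basicFn_succ_eq_tsum q s (m - 2), ← tsum_mul_left]
  congr 1
  · simp
  · refine tsum_congr fun j => ?_
    rw [show m - 2 * ((j + 1 : ℕ) : ℤ) = m - 2 - 2 * j by push_cast; ring, mul_add_one, pow_add,
      mul_comm (q ^ _) (q ^ _), mul_assoc]

end BasicFn

lemma applyOps_succ (q : ℝ) (s : ℕ) (f : ℤ → ℝ) :
    applyOps q (s + 1) f = applyOps q s fun m => f m - q ^ (2 * (s + 1)) * f (m - 2) := by
  rw [applyOps, List.range_succ, List.foldr_append]
  rfl

theorem stmt_12_general (q : ℝ) (r : ℕ) :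
    applyOps q r (basicFn q r) = fun m : ℤ => if 0 ≤ m then (1 : ℝ) else 0 := by
  induction r with
  | zero => exact funext (basicFn_zero q)
  | succ s ih =>
    have hshift : (fun m => basicFn q (s + 1) m - q ^ (2 * (s + 1)) * basicFn q (s + 1) (m - 2)) =
        basicFn q s := funext fun m => by rw [basicFn_succ]; ring
    rw [applyOps_succ, hshift, ih]

/-- For `q > 1` and `r ≥ 1`,
`(∏_{j=1}^{r} (1 - q^{2j} S)) b = 1_{ℤ≥0}`. -/
theorem stmt_12 (q : ℝ) (hq : 1 < q) (r : ℕ) (hr : 1 ≤ r) :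
    applyOps q r (basicFn q r) = fun m : ℤ => if 0 ≤ m then (1 : ℝ) else 0 :=
  stmt_12_general q r
end
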